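/- (Lemma 1, part (38).) Let M be an N×N real symmetric matrix with eigenvalues λ₁ > λ₂ ≥ ⋯ ≥ λ_N, and let v₁ be a unit eigenvector associated with λ₁. Let x ∈ ℝ^N with ‖x‖₂ = 1 and ⟨x, v₁⟩ ≥ 0. If ‖(x xᵀ − I_N) M x‖₂ ≤ ε and |xᵀ M x − λ₁| ≤ ε, then ‖x − v₁‖₂² ≤ 2ε / (λ₁ − λ₂). -/
import Mathlib


open Matrix

/-- Lemma 1, part (38): with eigenvalues `λ₁ > λ₂ ≥ ⋯ ≥ λ_N`
and `v₁` a unit eigenvector for `λ₁`; if `x` is a unit vector with `⟨x, v₁⟩ ≥ 0`,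
`‖(x xᵀ − I) M x‖₂ ≤ ε`, and `|xᵀ M x − λ₁| ≤ ε`, then
`‖x − v₁‖₂² ≤ 2ε / (λ₁ − λ₂)`. -/
theorem stmt_5 {N : ℕ} (hN : 1 < N) (M : Matrix (Fin N) (Fin N) ℝ) (hM : M.IsSymm)
    (lam : Fin N → ℝ) (v : Fin N → Fin N → ℝ)
    (horth : ∀ i j : Fin N, v i ⬝ᵥ v j = if i = j then 1 else 0)
    (heig : ∀ i : Fin N, M *ᵥ v i = lam i • v i)
    (hmono : ∀ i j : Fin N, i ≤ j → lam j ≤ lam i)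
    (hgap : lam ⟨1, hN⟩ < lam ⟨0, by omega⟩)
    (x : Fin N → ℝ) (hx : Real.sqrt (∑ i, x i ^ 2) = 1)
    (hsign : x ⬝ᵥ v ⟨0, by omega⟩ ≥ 0) (ε : ℝ)
    (hgrad : Real.sqrt (∑ i, (((vecMulVec x x - 1) *ᵥ (M *ᵥ x)) i) ^ 2) ≤ ε)
    (hray : |x ⬝ᵥ (M *ᵥ x) - lam ⟨0, by omega⟩| ≤ ε) :
    ∑ i, (x i - v ⟨0, by omega⟩ i) ^ 2 ≤ 2 * ε / (lam ⟨0, by omega⟩ - lam ⟨1, hN⟩) := by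
  set i0 : Fin N := ⟨0, by omega⟩
  set i1 : Fin N := ⟨1, hN⟩
  set V : Matrix (Fin N) (Fin N) ℝ := Matrix.of v with hV
  -- rows of V are orthonormal
  have h1 : V * Vᵀ = 1 := by
    ext i j
    simpa [Matrix.mul_apply, Matrix.transpose_apply, hV, Matrix.one_apply,
      dotProduct] using horth i j
  have h2 : Vᵀ * V = 1 := mul_eq_one_comm.mp h1
  -- eigen relation in matrix form
  have hMV : M * Vᵀ = Vᵀ * Matrix.diagonal lam := by
    ext j i
    have := congrFun (heig i) j
    simp only [Matrix.mulVec, dotProduct, Pi.smul_apply, smul_eq_mul] at this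
    simp [Matrix.mul_apply, Matrix.transpose_apply, Matrix.diagonal, hV, this,
      mul_comm]
  have hMdec : M = Vᵀ * Matrix.diagonal lam * V := by
    calc M = M * (Vᵀ * V) := by rw [h2, Matrix.mul_one]
    _ = (M * Vᵀ) * V := by rw [Matrix.mul_assoc]
    _ = Vᵀ * Matrix.diagonal lam * V := by rw [hMV]
  set c : Fin N → ℝ := V *ᵥ x with hc
  have hci : ∀ i, c i = x ⬝ᵥ v i := by
    intro i
    simp [hc, Matrix.mulVec, dotProduct, hV, mul_comm]
  -- norm of x
  have hxs : ∑ i, x i ^ 2 = 1 := by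
    have hnn : (0:ℝ) ≤ ∑ i, x i ^ 2 := Finset.sum_nonneg fun i _ => sq_nonneg _
    have := Real.sq_sqrt hnn
    rw [hx] at this; linarith
  have hxx : x ⬝ᵥ x = 1 := by
    simpa [dotProduct, sq] using hxs
  -- Parseval
  have hpar : ∑ i, c i ^ 2 = 1 := by
    have : ∑ i, c i ^ 2 = c ⬝ᵥ c := by simp [dotProduct, sq]
    rw [this, hc]
    rw [Matrix.dotProduct_mulVec, ← Matrix.mulVec_transpose, Matrix.mulVec_mulVec, h2]
    simpa using hxx
  -- Rayleigh quotient in eigencoordinates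
  have hrq : x ⬝ᵥ (M *ᵥ x) = ∑ i, lam i * c i ^ 2 := by
    rw [hMdec, Matrix.mul_assoc, ← Matrix.mulVec_mulVec,
      Matrix.dotProduct_mulVec, Matrix.vecMul_transpose, ← Matrix.mulVec_mulVec]
    simp only [← hc, dotProduct, Matrix.mulVec_diagonal]
    exact Finset.sum_congr rfl fun i _ => by ring
  have hgap' : (0:ℝ) < lam i0 - lam i1 := by linarith
  -- key bound: (lam i0 - lam i1) * (1 - c i0 ^2) ≤ ε
  have hkey : (lam i0 - lam i1) * (1 - c i0 ^ 2) ≤ ε := by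
    have h1' : lam i0 - x ⬝ᵥ (M *ᵥ x) ≤ ε := by
      have := abs_le.mp hray; linarith [this.1]
    have heq : lam i0 - x ⬝ᵥ (M *ᵥ x) = ∑ i, (lam i0 - lam i) * c i ^ 2 := by
      have hs : ∑ i, (lam i0 - lam i) * c i ^ 2
          = lam i0 * (∑ i, c i ^ 2) - ∑ i, lam i * c i ^ 2 := by
        rw [Finset.mul_sum, ← Finset.sum_sub_distrib]
        exact Finset.sum_congr rfl fun i _ => by ring
      rw [hrq, hs, hpar]; ring
    have hbound : (lam i0 - lam i1) * (1 - c i0 ^ 2) ≤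
        ∑ i, (lam i0 - lam i) * c i ^ 2 := by
      have hsplit : (1 : ℝ) - c i0 ^ 2 = ∑ i ∈ Finset.univ.erase i0, c i ^ 2 := by
        rw [← hpar, ← Finset.add_sum_erase _ _ (Finset.mem_univ i0)]; ring
      rw [hsplit, Finset.mul_sum,
        ← Finset.add_sum_erase _ (fun i => (lam i0 - lam i) * c i ^ 2)
          (Finset.mem_univ i0)]
      have h0 : (lam i0 - lam i0) * c i0 ^ 2 = 0 := by ring
      rw [h0, zero_add]
      apply Finset.sum_le_sum
      intro i hi
      have hine : i1 ≤ i := by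
        have : i ≠ i0 := Finset.ne_of_mem_erase hi
        have : (i : ℕ) ≠ 0 := fun h => this (Fin.ext h)
        exact Fin.mk_le_of_le_val (by omega)
      have := hmono i1 i hine
      nlinarith [sq_nonneg (c i)]
    linarith
  -- c i0 ∈ [0,1]
  have hc0nn : 0 ≤ c i0 := by rw [hci]; exact hsign
  have hc0sq : c i0 ^ 2 ≤ 1 := by
    rw [← hpar]
    exact Finset.single_le_sum (fun i _ => sq_nonneg (c i)) (Finset.mem_univ i0)
  -- distance formula
  have hv0 : ∑ i, v i0 i ^ 2 = 1 := by
    have := horth i0 i0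
    simpa [dotProduct, sq] using this
  have hdist : ∑ i, (x i - v i0 i) ^ 2 = 2 - 2 * c i0 := by
    have : ∀ i, (x i - v i0 i) ^ 2 = x i ^ 2 + v i0 i ^ 2 - 2 * (x i * v i0 i) := by
      intro i; ring
    simp only [this]
    rw [Finset.sum_sub_distrib, Finset.sum_add_distrib, hxs, hv0, ← Finset.mul_sum,
      hci]
    simp [dotProduct]
    norm_num
  rw [hdist, le_div_iff₀ hgap']
  have hc0le : c i0 ≤ 1 := by nlinarith
  nlinarith [mul_nonneg (mul_nonneg hgap'.le hc0nn) (sub_nonneg.mpr hc0le)]
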